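/- arXiv:2211.13831 — 2 statements merged into one kernel-verified Lean document; each statement's English description precedes it below -/
import Mathlib

section
/- Let θ > 0, p(i) = (i−1)/(θ+i−1) and q(i) = θ/(θ+i−1) for i ≥ 3, with p(1) = 0, p(2) = 1, q(1) = 1, q(2) = 0, and define EC_j(n) := q(n−j+1)·Π_{l=n−j+2}^{n−1} p(l) + Σ_{i=j+1}^{n−1} Σ_{k=0}^{n−i−1} (−1)^k q(i−j) Π_{l=i−j+1}^{i−2} p(l) Π_{l=i}^{k+i} q(l). Then for 2 ≤ j ≤ n−2: EC_j(n) = θ(n−j+1)_{(j−2)}/(θ+n−j)_{(j−1)} + Σ_{k=1}^{n−j−1} (−1)^{k+1} θ^k (j−2)! / ((θ+2)_{(j−3)} (θ+j)_{(k)}) + Σ_{i=j+3}^{n−1} Σ_{k=1}^{n−i} (−θ)^{k+1} (i−j)_{(j−2)} / ((θ+i−j−1)_{(j−1)} (θ+i−1)_{(k)}); moreover EC_n(n) = (n−2)!/(θ+2)_{(n−3)} and EC_{n−1}(n) = 0. -/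
/-!
Every factor `p l = (l-1)/(θ+l-1)` and `q l = θ/(θ+l-1)` with `l ≥ 3` is a ratio of consecutive
linear terms, so each product over an interval is a quotient of rising factorials. In the double
sum, the row `i = j+1` contains `q 1 = 1` and `p 2 = 1` and yields the `(j-2)!` sum, the row
`i = j+2` vanishes because `q 2 = 0`, and every later row becomes a row of the last sum after the
shift `k ↦ k+1`.
-/

open Finset

/-- Rising factorial `(x)_{(j)} = x (x+1) ⋯ (x+j-1)`. -/
noncomputable def risingFac (x : ℝ) (j : ℕ) : ℝ := ∏ k ∈ Finset.range j, (x + k)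

theorem risingFac_succ (x : ℝ) (m : ℕ) : risingFac x (m + 1) = x * risingFac (x + 1) m := by
  simp only [risingFac, prod_range_succ', Nat.cast_add, Nat.cast_one, Nat.cast_zero, add_zero,
    add_assoc, add_comm (1 : ℝ), mul_comm x]

theorem risingFac_pos {x : ℝ} (hx : 0 < x) (m : ℕ) : 0 < risingFac x m :=
  prod_pos fun _ _ => by positivity

theorem risingFac_two (m : ℕ) : risingFac 2 m = (m + 1).factorial := by
  induction m with
  | zero => simp [risingFac]
  | succ m ih =>
    rw [risingFac, prod_range_succ, ← risingFac, ih, Nat.factorial_succ (m + 1)]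
    push_cast
    ring

theorem prod_Icc_add_natCast (x : ℝ) (a b : ℕ) :
    ∏ l ∈ Icc a b, (x + l) = risingFac (x + a) (b + 1 - a) := by
  rw [← Ico_add_one_right_eq_Icc, prod_Ico_eq_prod_range, risingFac]
  push_cast
  simp only [add_assoc]

theorem sum_Icc_one_eq_sum_range {M : Type*} [AddCommMonoid M] (f : ℕ → M) (m : ℕ) :
    ∑ k ∈ Icc 1 m, f k = ∑ k ∈ range m, f (k + 1) := by
  rw [← Ico_add_one_right_eq_Icc, sum_Ico_eq_sum_range, Nat.add_sub_cancel]
  simp only [add_comm 1]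

@[to_additive]
theorem prod_Icc_eq_mul_prod_Icc_succ {M : Type*} [CommMonoid M] (f : ℕ → M) {a b : ℕ}
    (h : a ≤ b) : ∏ i ∈ Icc a b, f i = f a * ∏ i ∈ Icc (a + 1) b, f i := by
  rw [Icc_eq_cons_Ioc h, prod_cons, ← Order.succ_eq_add_one, Icc_succ_left_eq_Ioc]

theorem sum_Icc_eq_sum_Icc_succ_of_eq_zero {M : Type*} [AddCommMonoid M] {f : ℕ → M} {a : ℕ}
    (ha : f a = 0) (b : ℕ) : ∑ i ∈ Icc a b, f i = ∑ i ∈ Icc (a + 1) b, f i := by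
  rcases Nat.lt_or_ge b a with hb | hb
  · rw [Icc_eq_empty (by omega), Icc_eq_empty (by omega)]
  · rw [sum_Icc_eq_add_sum_Icc_succ _ hb, ha, zero_add]

section Rates

variable {θ : ℝ} {p q : ℕ → ℝ}

theorem prod_Icc_p_of_three_le (hp : ∀ i, 3 ≤ i → p i = (i - 1) / (θ + i - 1)) {a : ℕ}
    (ha : 3 ≤ a) (b : ℕ) :
    ∏ l ∈ Icc a b, p l
      = risingFac ((a : ℝ) - 1) (b + 1 - a) / risingFac (θ + a - 1) (b + 1 - a) := by
  have hp' : ∀ l ∈ Icc a b, p l = (-1 + l) / (θ - 1 + l) := fun l hl => by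
    rw [hp l (ha.trans (mem_Icc.mp hl).1)]; ring_nf
  rw [prod_congr rfl hp', prod_div_distrib, prod_Icc_add_natCast, prod_Icc_add_natCast]
  ring_nf

theorem prod_Icc_two_p (hp2 : p 2 = 1) (hp : ∀ i, 3 ≤ i → p i = (i - 1) / (θ + i - 1))
    (b : ℕ) : ∏ l ∈ Icc 2 b, p l = (b - 1).factorial / risingFac (θ + 2) (b - 2) := by
  rcases Nat.lt_or_ge b 2 with hb | hb
  · rw [Icc_eq_empty (by omega), Nat.sub_eq_zero_of_le (by omega : b ≤ 2),
      Nat.sub_eq_zero_of_le (by omega : b ≤ 1)]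
    simp [risingFac]
  · rw [prod_Icc_eq_mul_prod_Icc_succ _ hb, hp2, one_mul, prod_Icc_p_of_three_le hp le_rfl,
      show b + 1 - 3 = b - 2 by omega]
    norm_num
    rw [risingFac_two, show b - 2 + 1 = b - 1 by omega, show θ + 3 - 1 = θ + 2 by ring]

theorem prod_Icc_q_of_three_le (hq : ∀ i, 3 ≤ i → q i = θ / (θ + i - 1)) {i : ℕ} (hi : 3 ≤ i)
    (k : ℕ) : ∏ l ∈ Icc i (k + i), q l = θ ^ (k + 1) / risingFac (θ + i - 1) (k + 1) := by
  have hq' : ∀ l ∈ Icc i (k + i), q l = θ / (θ - 1 + l) := fun l hl => by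
    rw [hq l (hi.trans (mem_Icc.mp hl).1)]; ring_nf
  rw [prod_congr rfl hq', prod_div_distrib, prod_Icc_add_natCast, prod_const, Nat.card_Icc,
    show k + i + 1 - i = k + 1 by omega]
  ring_nf

theorem leading_term_eq (hθ : 0 < θ) (hp : ∀ i, 3 ≤ i → p i = (i - 1) / (θ + i - 1))
    (hq : ∀ i, 3 ≤ i → q i = θ / (θ + i - 1)) {j n : ℕ} (hj : 2 ≤ j) (hjn : j + 2 ≤ n) :
    q (n - j + 1) * ∏ l ∈ Icc (n - j + 2) (n - 1), p l
      = θ * risingFac ((n : ℝ) - j + 1) (j - 2) / risingFac (θ + n - j) (j - 1) := by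
  have hnj : (2 : ℝ) ≤ n - j := by
    rw [le_sub_iff_add_le]; exact_mod_cast (by omega : 2 + j ≤ n)
  rw [hq _ (by omega), prod_Icc_p_of_three_le hp (by omega),
    show n - 1 + 1 - (n - j + 2) = j - 2 by omega, show j - 1 = j - 2 + 1 by omega, risingFac_succ]
  push_cast [Nat.cast_sub (by omega : j ≤ n)]
  have hR := risingFac_pos (by linarith : 0 < θ + n - j + 1) (j - 2)
  rw [show (n : ℝ) - j + 2 - 1 = n - j + 1 by ring,
    show θ + (n - j + 2) - 1 = θ + n - j + 1 by ring, show θ + (n - j + 1) - 1 = θ + n - j by ring]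
  field_simp

theorem first_row_sum_eq (hθ : 0 < θ) (hp2 : p 2 = 1)
    (hp : ∀ i, 3 ≤ i → p i = (i - 1) / (θ + i - 1)) (hq1 : q 1 = 1)
    (hq : ∀ i, 3 ≤ i → q i = θ / (θ + i - 1)) {j : ℕ} (hj : 2 ≤ j) (n : ℕ) :
    ∑ k ∈ range (n - (j + 1)), (-1 : ℝ) ^ k * q (j + 1 - j)
        * (∏ l ∈ Icc (j + 1 - j + 1) (j + 1 - 2), p l) * ∏ l ∈ Icc (j + 1) (k + (j + 1)), q l
      = ∑ k ∈ Icc 1 (n - j - 1), (-1 : ℝ) ^ (k + 1) * θ ^ k * ((j - 2).factorial : ℝ)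
          / (risingFac (θ + 2) (j - 3) * risingFac (θ + j) k) := by
  rw [sum_Icc_one_eq_sum_range, show n - (j + 1) = n - j - 1 by omega]
  refine sum_congr rfl fun k _ => ?_
  rw [Nat.add_sub_cancel_left, hq1, prod_Icc_two_p hp2 hp, prod_Icc_q_of_three_le hq (by omega),
    show j + 1 - 2 - 1 = j - 2 by omega, show j + 1 - 2 - 2 = j - 3 by omega]
  push_cast
  rw [show θ + (j + 1) - 1 = θ + j by ring]
  have h₁ := risingFac_pos (by linarith : 0 < θ + 2) (j - 3)
  have h₂ := risingFac_pos (by positivity : 0 < θ + j) (k + 1)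
  field_simp
  ring

theorem row_sum_eq_of_add_three_le (hθ : 0 < θ) (hp : ∀ i, 3 ≤ i → p i = (i - 1) / (θ + i - 1))
    (hq : ∀ i, 3 ≤ i → q i = θ / (θ + i - 1)) {i j : ℕ} (hj : 2 ≤ j) (hij : j + 3 ≤ i) (n : ℕ) :
    ∑ k ∈ range (n - i), (-1 : ℝ) ^ k * q (i - j) * (∏ l ∈ Icc (i - j + 1) (i - 2), p l)
        * ∏ l ∈ Icc i (k + i), q l
      = ∑ k ∈ Icc 1 (n - i), (-θ) ^ (k + 1) * risingFac ((i : ℝ) - j) (j - 2)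
          / (risingFac (θ + i - j - 1) (j - 1) * risingFac (θ + i - 1) k) := by
  have hij' : (3 : ℝ) ≤ i - j := by
    rw [le_sub_iff_add_le]; exact_mod_cast (by omega : 3 + j ≤ i)
  rw [sum_Icc_one_eq_sum_range]
  refine sum_congr rfl fun k _ => ?_
  rw [hq _ (by omega), prod_Icc_p_of_three_le hp (by omega), prod_Icc_q_of_three_le hq (by omega),
    show i - 2 + 1 - (i - j + 1) = j - 2 by omega, show j - 1 = j - 2 + 1 by omega,
    risingFac_succ (θ + i - j - 1)]
  push_cast [Nat.cast_sub (by omega : j ≤ i)]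
  rw [show (i : ℝ) - j + 1 - 1 = i - j by ring,
    show θ + (i - j + 1) - 1 = θ + i - j - 1 + 1 by ring,
    show θ + (i - j) - 1 = θ + i - j - 1 by ring]
  have h₁ := risingFac_pos (by linarith : 0 < θ + i - j - 1 + 1) (j - 2)
  have h₂ := risingFac_pos (by linarith : 0 < θ + i - 1) (k + 1)
  have h₃ : θ + i - j - 1 ≠ 0 := by linarith
  field_simp
  ring

end Rates

theorem stmt5_general (θ : ℝ) (hθ : 0 < θ) (p q : ℕ → ℝ)
    (hp2 : p 2 = 1) (hq1 : q 1 = 1) (hq2 : q 2 = 0)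
    (hp : ∀ i, 3 ≤ i → p i = (i - 1) / (θ + i - 1))
    (hq : ∀ i, 3 ≤ i → q i = θ / (θ + i - 1))
    (EC : ℕ → ℕ → ℝ)
    (hEC : ∀ j n : ℕ, EC j n =
      q (n - j + 1) * ∏ l ∈ Finset.Icc (n - j + 2) (n - 1), p l
      + ∑ i ∈ Finset.Icc (j + 1) (n - 1), ∑ k ∈ Finset.range (n - i),
          (-1 : ℝ) ^ k * q (i - j) * (∏ l ∈ Finset.Icc (i - j + 1) (i - 2), p l)
            * ∏ l ∈ Finset.Icc i (k + i), q l)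
    (n : ℕ) (hn : 4 ≤ n) :
    (∀ j : ℕ, 2 ≤ j → j ≤ n - 2 →
      EC j n =
        θ * risingFac ((n : ℝ) - j + 1) (j - 2) / risingFac (θ + n - j) (j - 1)
        + (∑ k ∈ Finset.Icc 1 (n - j - 1),
            (-1 : ℝ) ^ (k + 1) * θ ^ k * ((j - 2).factorial : ℝ)
              / (risingFac (θ + 2) (j - 3) * risingFac (θ + j) k))
        + ∑ i ∈ Finset.Icc (j + 3) (n - 1), ∑ k ∈ Finset.Icc 1 (n - i),
            (-θ) ^ (k + 1) * risingFac ((i : ℝ) - j) (j - 2)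
              / (risingFac (θ + i - j - 1) (j - 1) * risingFac (θ + i - 1) k)) ∧
    EC n n = ((n - 2).factorial : ℝ) / risingFac (θ + 2) (n - 3) ∧
    EC (n - 1) n = 0 := by
  refine ⟨fun j hj hjn => ?_, ?_, ?_⟩
  · rw [hEC, leading_term_eq hθ hp hq hj (by omega), sum_Icc_eq_add_sum_Icc_succ _ (by omega),
      first_row_sum_eq hθ hp2 hp hq1 hq hj, sum_Icc_eq_sum_Icc_succ_of_eq_zero (a := j + 1 + 1),
      sum_congr rfl fun i hi => row_sum_eq_of_add_three_le hθ hp hq hj (by simp at hi; omega) n]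
    case ha => simp [add_assoc, hq2]
    exact (add_assoc _ _ _).symm
  · rw [hEC, Nat.sub_self, Icc_eq_empty (by omega : ¬ n + 1 ≤ n - 1), sum_empty, add_zero, hq1,
      one_mul, prod_Icc_two_p hp2 hp, show n - 1 - 1 = n - 2 by omega,
      show n - 1 - 2 = n - 3 by omega]
  · rw [hEC, show n - (n - 1) + 1 = 2 by omega, hq2,
      Icc_eq_empty (by omega : ¬ n - 1 + 1 ≤ n - 1)]
    simp

/-- exact expected number of `j`-cycles of the playground-game chain `η^{n,θ}`. -/
theorem stmt5 (θ : ℝ) (hθ : 0 < θ) (p q : ℕ → ℝ)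
    (hp1 : p 1 = 0) (hp2 : p 2 = 1) (hq1 : q 1 = 1) (hq2 : q 2 = 0)
    (hp : ∀ i, 3 ≤ i → p i = (i - 1) / (θ + i - 1))
    (hq : ∀ i, 3 ≤ i → q i = θ / (θ + i - 1))
    (EC : ℕ → ℕ → ℝ)
    (hEC : ∀ j n : ℕ, EC j n =
      q (n - j + 1) * ∏ l ∈ Finset.Icc (n - j + 2) (n - 1), p l
      + ∑ i ∈ Finset.Icc (j + 1) (n - 1), ∑ k ∈ Finset.range (n - i),
          (-1 : ℝ) ^ k * q (i - j) * (∏ l ∈ Finset.Icc (i - j + 1) (i - 2), p l)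
            * ∏ l ∈ Finset.Icc i (k + i), q l)
    (n : ℕ) (hn : 4 ≤ n) :
    (∀ j : ℕ, 2 ≤ j → j ≤ n - 2 →
      EC j n =
        θ * risingFac ((n : ℝ) - j + 1) (j - 2) / risingFac (θ + n - j) (j - 1)
        + (∑ k ∈ Finset.Icc 1 (n - j - 1),
            (-1 : ℝ) ^ (k + 1) * θ ^ k * ((j - 2).factorial : ℝ)
              / (risingFac (θ + 2) (j - 3) * risingFac (θ + j) k))
        + ∑ i ∈ Finset.Icc (j + 3) (n - 1), ∑ k ∈ Finset.Icc 1 (n - i),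
            (-θ) ^ (k + 1) * risingFac ((i : ℝ) - j) (j - 2)
              / (risingFac (θ + i - j - 1) (j - 1) * risingFac (θ + i - 1) k)) ∧
    EC n n = ((n - 2).factorial : ℝ) / risingFac (θ + 2) (n - 3) ∧
    EC (n - 1) n = 0 :=
  stmt5_general θ hθ p q hp2 hq1 hq2 hp hq EC hEC n hn
end

section
/- Fix n ≥ 4 and s > 0. Let θ : ℕ → ℝ with θ_1 = 1 and θ_i > 0, let p : ℕ → ℝ with p(1) = 0, p(2) = 1, 0 < p(i) < 1 for i ≥ 3, q(i) := 1 − p(i), and suppose θ_i = (i−1)·q(i)/(p(i)·p(i−1)) for all 3 ≤ i ≤ n−1. Let Δ_n, μ_n, ν_n, γ_n(θ) be as follows: Δ_n is the set of a : {1,…,n} → {0,1} with a(1) = 1, a(n) = 0 and no two adjacent 1s; μ_n(a) := Π_{i=1}^{n−1} t_i(a) with t_i(a) = 1 if a(i+1) = 1, t_i(a) = p(i) if a(i+1) = a(i) = 0, t_i(a) = q(i) if a(i+1) = 0, a(i) = 1; γ_n(θ') := Σ_{a ∈ Δ_n} Π_{i=1}^{n} b'_i(a(i)) with b'_i(1)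 = θ'_i/(i−1+θ'_i), b'_i(0) = (i−1)/(i−1+θ'_i), for any positive sequence θ'. Then Σ_{a ∈ Δ_n} s^{|a|}·μ_n(a) = ( γ_n(sθ)/γ_n(θ) ) · ( (sθ)_{<n>}/θ_{<n>} ), where |a| := #{i : a(i) = 1}, sθ denotes the sequence (s·θ_i)_i, and θ'_{<n>} := Π_{k=1}^{n} (θ'_k + k − 1). -/
open Finset Filter

/-- Binary strings of length `n` (encoded by their set of `1`-positions, a subset of
`{1,…,n}`) with `a 1 = 1`, `a n = 0` and no two adjacent ones. -/
def derSet (n : ℕ) : Finset (Finset ℕ) :=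
  (Finset.Icc 1 n).powerset.filter (fun s => 1 ∈ s ∧ n ∉ s ∧ ∀ i ∈ s, i + 1 ∉ s)

/-- Mass function of the random-derangement Markov chain `X^{n,p}` on `derSet n`. -/
noncomputable def muD (p q : ℕ → ℝ) (n : ℕ) (s : Finset ℕ) : ℝ :=
  ∏ i ∈ Finset.Icc 1 (n - 1), if i + 1 ∈ s then 1 else if i ∈ s then q i else p i

/-- Mass function of the generalized Feller coupling `(Y_n, …, Y_1)`. -/
noncomputable def nuD (θ : ℕ → ℝ) (n : ℕ) (s : Finset ℕ) : ℝ :=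
  ∏ i ∈ Finset.Icc 1 n,
    if i ∈ s then θ i / ((i : ℝ) - 1 + θ i) else ((i : ℝ) - 1) / ((i : ℝ) - 1 + θ i)

/-- `γ_n(θ') = P((Y'_n,…,Y'_1) ∈ Δ_n)` for parameter sequence `θ'`. -/
noncomputable def gamD (θ : ℕ → ℝ) (n : ℕ) : ℝ := ∑ s ∈ derSet n, nuD θ n s

open scoped Nat

/-!
On `Δ_n` the mass of the chain is proportional to the unnormalised Feller weight
`∏_{i ∈ a} θ_i ∏_{i ∉ a} (i - 1)`: splitting `Δ_{n+2}` according to whether `n + 1` is a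
one gives the same two-term recursion for both, and the relation between `θ` and `p` is exactly
what makes the proportionality constants `(n - 1)! / ∏_{2 ≤ i < n} p_i` match. Since `μ_n` sums
to one, it is the Feller coupling conditioned on `Δ_n`. Replacing `θ` by `sθ` multiplies the
Feller weight of `a` by `s^{|a|}` and changes the normalisation from `θ_{<n>}` to `(sθ)_{<n>}`.
-/

theorem mem_derSet {n : ℕ} {a : Finset ℕ} :
    a ∈ derSet n ↔ a ⊆ Icc 1 n ∧ 1 ∈ a ∧ n ∉ a ∧ ∀ i ∈ a, i + 1 ∉ a := by
  simp [derSet]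

theorem two_le_of_mem_derSet {n : ℕ} {a : Finset ℕ} (ha : a ∈ derSet n) : 2 ≤ n := by
  obtain ⟨hsub, h1, hn, -⟩ := mem_derSet.1 ha
  have := (mem_Icc.1 (hsub h1)).2
  by_contra h
  exact hn (by rwa [show n = 1 by omega])

theorem notMem_of_mem_derSet {n m : ℕ} {a : Finset ℕ} (ha : a ∈ derSet n) (hm : n ≤ m) :
    m ∉ a := fun h => by
  obtain ⟨hsub, -, hn, -⟩ := mem_derSet.1 ha
  have := (mem_Icc.1 (hsub h)).2
  exact hn (by rwa [show n = m by omega])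

theorem derSet_two : derSet 2 = {{1}} := by decide

theorem derSet_three : derSet 3 = {{1}} := by decide

theorem derSet_add_two {n : ℕ} (hn : 1 ≤ n) :
    derSet (n + 2) = derSet (n + 1) ∪ (derSet n).image (insert (n + 1)) := by
  ext a
  simp only [mem_union, mem_image, mem_derSet, subset_iff, mem_Icc]
  constructor
  · rintro ⟨hsub, h1, hn2, hadj⟩
    by_cases h : n + 1 ∈ a
    · refine Or.inr ⟨a.erase (n + 1), ?_, insert_erase h⟩
      simp only [mem_erase]
      grind
    · grind
  · rintro (⟨hsub, h1, hn1, hadj⟩ | ⟨b, ⟨hsub, h1, hnb, hadj⟩, rfl⟩)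
    · grind
    · simp only [mem_insert]
      grind

theorem sum_derSet_add_two {M : Type*} [AddCommMonoid M] (f : Finset ℕ → M) {n : ℕ}
    (hn : 1 ≤ n) :
    ∑ a ∈ derSet (n + 2), f a =
      ∑ a ∈ derSet (n + 1), f a + ∑ b ∈ derSet n, f (insert (n + 1) b) := by
  have hdisj : Disjoint (derSet (n + 1)) ((derSet n).image (insert (n + 1))) := by
    simp only [disjoint_left, mem_image, not_exists, not_and]
    rintro a ha b - rfl
    exact notMem_of_mem_derSet ha le_rfl (mem_insert_self _ _)
  rw [derSet_add_two hn, sum_union hdisj, sum_image]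
  intro b hb c hc hbc
  simpa [erase_insert (notMem_of_mem_derSet hb n.le_succ),
    erase_insert (notMem_of_mem_derSet hc n.le_succ)] using congrArg (erase · (n + 1)) hbc

section muD

variable (p q : ℕ → ℝ)

theorem muD_add_two_of_notMem {n : ℕ} {a : Finset ℕ} (h₁ : n + 1 ∉ a) (h₂ : n + 2 ∉ a) :
    muD p q (n + 2) a = muD p q (n + 1) a * p (n + 1) := by
  rw [muD, muD, Nat.add_sub_cancel, show n + 2 - 1 = n + 1 from rfl,
    prod_Icc_succ_top (Nat.le_add_left 1 n)]
  simp [h₁, h₂]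

theorem muD_add_two_insert {n : ℕ} {b : Finset ℕ} (hn : 1 ≤ n) (h : n + 2 ∉ b) :
    muD p q (n + 2) (insert (n + 1) b) = muD p q n b * q (n + 1) := by
  obtain ⟨m, rfl⟩ : ∃ m, n = m + 1 := ⟨n - 1, by omega⟩
  rw [muD, muD, Nat.add_sub_cancel, show m + 1 + 2 - 1 = m + 1 + 1 from rfl,
    prod_Icc_succ_top (by omega), prod_Icc_succ_top (by omega)]
  simp only [mem_insert, h, true_or, if_true, or_false, mul_one,
    show m + 1 + 1 + 1 ≠ m + 1 + 1 by omega, if_false]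
  congr 1
  refine prod_congr rfl fun i hi => ?_
  have := (mem_Icc.1 hi).2
  simp only [show i + 1 ≠ m + 1 + 1 by omega, show i ≠ m + 1 + 1 by omega, false_or]

theorem sum_muD_eq_one (hq : ∀ i, q i = 1 - p i) (hp1 : p 1 = 0) (hp2 : p 2 = 1) :
    ∀ n, 2 ≤ n → ∑ a ∈ derSet n, muD p q n a = 1
  | 2, _ => by simp [derSet_two, muD, hq, hp1]
  | 3, _ => by simp [derSet_three, muD, show Icc 1 2 = {1, 2} by decide, hq, hp1, hp2]
  | n + 4, _ => by
    have ih₁ := sum_muD_eq_one hq hp1 hp2 (n + 3) (by omega)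
    have ih₂ := sum_muD_eq_one hq hp1 hp2 (n + 2) (by omega)
    rw [show n + 4 = n + 2 + 2 from rfl, sum_derSet_add_two _ (by omega),
      sum_congr rfl fun a ha => muD_add_two_of_notMem p q (notMem_of_mem_derSet ha le_rfl)
        (notMem_of_mem_derSet ha (by omega)),
      sum_congr rfl fun b hb => muD_add_two_insert p q (by omega)
        (notMem_of_mem_derSet hb (by omega)),
      ← sum_mul, ← sum_mul, ih₁, ih₂, hq]
    ring

end muD

noncomputable def fellerWeight (θ : ℕ → ℝ) (n : ℕ) (a : Finset ℕ) : ℝ :=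
  ∏ i ∈ Icc 1 n, if i ∈ a then θ i else ((i : ℝ) - 1)

section fellerWeight

variable (θ : ℕ → ℝ)

theorem fellerWeight_succ (n : ℕ) (a : Finset ℕ) :
    fellerWeight θ (n + 1) a =
      fellerWeight θ n a * if n + 1 ∈ a then θ (n + 1) else (n : ℝ) := by
  rw [fellerWeight, fellerWeight, prod_Icc_succ_top (Nat.le_add_left 1 n)]
  push_cast
  rw [add_sub_cancel_right]

theorem fellerWeight_add_two_of_notMem {n : ℕ} {a : Finset ℕ} (h : n + 2 ∉ a) :
    fellerWeight θ (n + 2) a = fellerWeight θ (n + 1) a * (n + 1 : ℝ) := by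
  rw [fellerWeight_succ, if_neg h]
  push_cast
  rfl

theorem fellerWeight_add_two_insert {n : ℕ} {b : Finset ℕ} (h : n + 2 ∉ b) :
    fellerWeight θ (n + 2) (insert (n + 1) b) =
      fellerWeight θ n b * θ (n + 1) * (n + 1 : ℝ) := by
  rw [fellerWeight_add_two_of_notMem θ (by simpa using h), fellerWeight_succ,
    if_pos (mem_insert_self _ _)]
  congr 2
  refine prod_congr rfl fun i hi => ?_
  simp only [mem_insert, show i ≠ n + 1 by have := (mem_Icc.1 hi).2; omega, false_or]

theorem fellerWeight_const_mul (s : ℝ) {n : ℕ} {a : Finset ℕ} (ha : a ⊆ Icc 1 n) :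
    fellerWeight (fun i => s * θ i) n a = s ^ a.card * fellerWeight θ n a := by
  have hpow : ∏ i ∈ Icc 1 n, (if i ∈ a then s else 1) = s ^ a.card := by
    rw [prod_ite_mem, inter_eq_right.2 ha, prod_const]
  rw [fellerWeight, fellerWeight, ← hpow, ← prod_mul_distrib]
  refine prod_congr rfl fun i _ => ?_
  split_ifs <;> ring

theorem nuD_eq_fellerWeight_div (n : ℕ) (a : Finset ℕ) :
    nuD θ n a = fellerWeight θ n a / ∏ k ∈ Icc 1 n, (θ k + k - 1) := by
  rw [nuD, fellerWeight, ← prod_div_distrib]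
  refine prod_congr rfl fun i _ => ?_
  split_ifs <;> ring

theorem gamD_eq_sum_fellerWeight_div (n : ℕ) :
    gamD θ n = (∑ a ∈ derSet n, fellerWeight θ n a) / ∏ k ∈ Icc 1 n, (θ k + k - 1) := by
  rw [gamD, sum_div]
  exact sum_congr rfl fun a _ => nuD_eq_fellerWeight_div θ n a

end fellerWeight

theorem prod_add_sub_one_pos {θ : ℕ → ℝ} (hθ : ∀ i, 1 ≤ i → 0 < θ i) (n : ℕ) :
    0 < ∏ k ∈ Icc 1 n, (θ k + k - 1) :=
  prod_pos fun k hk => by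
    have hk : 1 ≤ k := (mem_Icc.1 hk).1
    have : (1 : ℝ) ≤ k := by exact_mod_cast hk
    linarith [hθ k hk]

section conditioning

variable (p q θ : ℕ → ℝ)

theorem fellerWeight_mul_prod_eq_factorial_mul_muD (hθq : θ 1 = q 1) :
    ∀ n, (∀ i, 3 ≤ i → i < n → θ i * (p i * p (i - 1)) = ((i : ℝ) - 1) * q i) →
      ∀ a ∈ derSet n,
        fellerWeight θ n a * ∏ i ∈ Ico 2 n, p i = ((n - 1)! : ℝ) * muD p q n a
  | 0, _, a, ha | 1, _, a, ha => absurd (two_le_of_mem_derSet ha) (by omega)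
  | 2, _, a, ha => by
    rw [derSet_two, mem_singleton] at ha
    subst ha
    norm_num [fellerWeight, muD, show Icc 1 2 = {1, 2} by decide, hθq]
  | n + 3, hrel, a, ha => by
    rw [show n + 3 = n + 1 + 2 from rfl, derSet_add_two (by omega), mem_union, mem_image] at ha
    rcases ha with ha | ⟨b, hb, rfl⟩
    · have ih := fellerWeight_mul_prod_eq_factorial_mul_muD hθq (n + 2)
        (fun i h₃ hi => hrel i h₃ (by omega)) a ha
      have h₂ := notMem_of_mem_derSet ha (by omega : n + 2 ≤ n + 3)
      rw [show n + 3 = n + 1 + 2 from rfl, fellerWeight_add_two_of_notMem θ h₂,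
        muD_add_two_of_notMem p q (notMem_of_mem_derSet ha le_rfl) h₂,
        prod_Ico_succ_top (by omega)]
      simp only [show n + 1 + 2 - 1 = n + 2 from rfl, show n + 2 - 1 = n + 1 from rfl,
        show n + 1 + 1 = n + 2 from rfl, Nat.factorial_succ (n + 1)] at ih ⊢
      push_cast
      linear_combination ((n : ℝ) + 2) * p (n + 2) * ih
    · have hn : 1 ≤ n := by have := two_le_of_mem_derSet hb; omega
      have ih := fellerWeight_mul_prod_eq_factorial_mul_muD hθq (n + 1)
        (fun i h₃ hi => hrel i h₃ (by omega)) b hb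
      have hθ := hrel (n + 2) (by omega) (by omega)
      have h₂ := notMem_of_mem_derSet hb (by omega : n + 1 ≤ n + 1 + 2)
      rw [fellerWeight_add_two_insert θ h₂, muD_add_two_insert p q (by omega) h₂,
        prod_Ico_succ_top (by omega), prod_Ico_succ_top (by omega)]
      simp only [show n + 1 + 2 - 1 = n + 2 from rfl, show n + 1 - 1 = n from rfl,
        show n + 1 + 1 = n + 2 from rfl, Nat.factorial_succ (n + 1), Nat.factorial_succ n]
        at ih hθ ⊢
      push_cast at ih hθ ⊢
      linear_combination ((n : ℝ) + 2) * θ (n + 2) * p (n + 1) * p (n + 2) * ih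
        + ((n : ℝ) + 2) * (n ! : ℝ) * muD p q (n + 1) b * hθ

theorem muD_eq_fellerWeight_div_sum (hq : ∀ i, q i = 1 - p i) (hp1 : p 1 = 0) (hp2 : p 2 = 1)
    (hθ1 : θ 1 = 1) {n : ℕ} (hn : 2 ≤ n) (hp : ∀ i, 2 ≤ i → i < n → p i ≠ 0)
    (hrel : ∀ i, 3 ≤ i → i < n → θ i * (p i * p (i - 1)) = ((i : ℝ) - 1) * q i)
    {a : Finset ℕ} (ha : a ∈ derSet n) :
    muD p q n a = fellerWeight θ n a / ∑ b ∈ derSet n, fellerWeight θ n b := by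
  have hW := fellerWeight_mul_prod_eq_factorial_mul_muD p q θ
    (by rw [hθ1, hq, hp1, sub_zero]) n hrel
  have hsum :
      (∑ b ∈ derSet n, fellerWeight θ n b) * ∏ i ∈ Ico 2 n, p i = ((n - 1)! : ℝ) := by
    rw [sum_mul, sum_congr rfl hW, ← mul_sum, sum_muD_eq_one p q hq hp1 hp2 n hn, mul_one]
  have hP : ∏ i ∈ Ico 2 n, p i ≠ 0 :=
    prod_ne_zero_iff.2 fun i hi => hp i (mem_Ico.1 hi).1 (mem_Ico.1 hi).2
  have hfac : ((n - 1)! : ℝ) ≠ 0 := by positivity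
  rw [eq_div_iff_mul_eq (left_ne_zero_of_mul (by rwa [hsum]))]
  apply mul_right_cancel₀ hP
  linear_combination muD p q n a * hsum - hW a ha

end conditioning

/-- probability generating function of the number of cycles of `X^{n,p}`. -/
theorem stmt11 (n : ℕ) (hn : 4 ≤ n) (s : ℝ) (hs : 0 < s)
    (θ : ℕ → ℝ) (hθ1 : θ 1 = 1) (hθpos : ∀ i, 1 ≤ i → 0 < θ i)
    (p q : ℕ → ℝ)
    (hp1 : p 1 = 0) (hp2 : p 2 = 1) (hp : ∀ i, 3 ≤ i → 0 < p i ∧ p i < 1)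
    (hq : ∀ i, q i = 1 - p i)
    (hrel : ∀ i : ℕ, 3 ≤ i → i ≤ n - 1 →
      θ i = ((i : ℝ) - 1) * q i / (p i * p (i - 1))) :
    ∑ a ∈ derSet n, s ^ a.card * muD p q n a
      = (gamD (fun i => s * θ i) n / gamD θ n)
        * ((∏ k ∈ Finset.Icc 1 n, (s * θ k + (k : ℝ) - 1))
            / ∏ k ∈ Finset.Icc 1 n, (θ k + (k : ℝ) - 1)) := by
  have hp₀ : ∀ i, 2 ≤ i → i < n → p i ≠ 0 := fun i h₂ _ => by
    rcases h₂.eq_or_lt with rfl | h₃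
    · rw [hp2]; exact one_ne_zero
    · exact (hp i h₃).1.ne'
  have hrel' : ∀ i, 3 ≤ i → i < n → θ i * (p i * p (i - 1)) = ((i : ℝ) - 1) * q i :=
    fun i h₃ hi => by
      rw [hrel i h₃ (by omega), div_mul_cancel₀ _
        (mul_ne_zero (hp₀ i (by omega) hi) (hp₀ (i - 1) (by omega) (by omega)))]
  have hμ := fun a (ha : a ∈ derSet n) =>
    muD_eq_fellerWeight_div_sum p q θ hq hp1 hp2 hθ1 (by omega) hp₀ hrel' ha
  have hD := (prod_add_sub_one_pos hθpos n).ne'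
  have hDs := (prod_add_sub_one_pos (fun i hi => mul_pos hs (hθpos i hi)) n).ne'
  rw [gamD_eq_sum_fellerWeight_div, gamD_eq_sum_fellerWeight_div,
    sum_congr rfl fun a ha => by rw [hμ a ha, mul_div_assoc'], ← sum_div,
    sum_congr rfl fun a ha => fellerWeight_const_mul θ s (mem_derSet.1 ha).1]
  field_simp
end
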